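/- arXiv:math/0702517 — 5 statements merged into one kernel-verified Lean document; each statement's English description precedes it below -/
import Mathlib

section
/- Let 0 → X → Y → Z → 0 be a short exact sequence of chain complexes in an abelian category. If H_n(Z) = 0, then the induced sequence 0 → im d_n^X → im d_n^Y → im d_n^Z → 0 is exact. -/
/-- Let `0 → X → Y → Z → 0` be a short exact sequence of chain complexes
(of modules over a ring).  If `H_n(Z) = 0`, then the induced sequence
`0 → im d_n^X → im d_n^Y → im d_n^Z → 0` is exact.
We write `m` for `n + 1`, so that the statement concerns the differential `d (m-1)` in
degree `n = m - 1`; the hypothesis `H_{m-1}(Z) = 0` says that every cycle of `Z` in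
degree `m-1` is a boundary.  Exactness of the image sequence is spelled out elementwise. -/
theorem stmt_2 (R : Type) [Ring R]
    (X Y Z : ℤ → Type)
    [∀ n, AddCommGroup (X n)] [∀ n, Module R (X n)]
    [∀ n, AddCommGroup (Y n)] [∀ n, Module R (Y n)]
    [∀ n, AddCommGroup (Z n)] [∀ n, Module R (Z n)]
    (dX : ∀ n : ℤ, X n →ₗ[R] X (n-1)) (dY : ∀ n : ℤ, Y n →ₗ[R] Y (n-1))
    (dZ : ∀ n : ℤ, Z n →ₗ[R] Z (n-1))
    (hdX : ∀ (n : ℤ) (x : X n), dX (n-1) (dX n x) = 0)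
    (hdY : ∀ (n : ℤ) (y : Y n), dY (n-1) (dY n y) = 0)
    (hdZ : ∀ (n : ℤ) (z : Z n), dZ (n-1) (dZ n z) = 0)
    (f : ∀ n : ℤ, X n →ₗ[R] Y n) (g : ∀ n : ℤ, Y n →ₗ[R] Z n)
    (hf : ∀ (n : ℤ) (x : X n), dY n (f n x) = f (n-1) (dX n x))
    (hg : ∀ (n : ℤ) (y : Y n), dZ n (g n y) = g (n-1) (dY n y))
    -- degreewise short exactness of 0 → X → Y → Z → 0
    (hinj : ∀ n : ℤ, Function.Injective (f n))
    (hex : ∀ n : ℤ, LinearMap.range (f n) = LinearMap.ker (g n))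
    (hsurj : ∀ n : ℤ, Function.Surjective (g n))
    (m : ℤ)
    -- H_{m-1}(Z) = 0 : every cycle of Z in degree m-1 is a boundary
    (hH : ∀ z : Z (m-1), dZ (m-1) z = 0 → ∃ w : Z m, dZ m w = z) :
    -- exactness of 0 → im d_{m-1}^X → im d_{m-1}^Y → im d_{m-1}^Z → 0
    (∀ b : X (m-1-1), (∃ x : X (m-1), dX (m-1) x = b) → f (m-1-1) b = 0 → b = 0) ∧
    (∀ b : Y (m-1-1), (∃ y : Y (m-1), dY (m-1) y = b) → g (m-1-1) b = 0 →
      ∃ a : X (m-1-1), (∃ x : X (m-1), dX (m-1) x = a) ∧ f (m-1-1) a = b) ∧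
    (∀ c : Z (m-1-1), (∃ z : Z (m-1), dZ (m-1) z = c) →
      ∃ b : Y (m-1-1), (∃ y : Y (m-1), dY (m-1) y = b) ∧ g (m-1-1) b = c) := by

  refine ⟨?_, ?_, ?_⟩
  · intro b _ hb
    exact hinj (m-1-1) (by simpa using hb)
  · rintro b ⟨y, rfl⟩ hb
    have hcyc : dZ (m-1) (g (m-1) y) = 0 := by rw [hg (m-1) y]; exact hb
    obtain ⟨w, hw⟩ := hH (g (m-1) y) hcyc
    obtain ⟨v, rfl⟩ := hsurj m w
    have hker : y - dY m v ∈ LinearMap.ker (g (m-1)) := by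
      simp only [LinearMap.mem_ker, map_sub]
      rw [← hg m v, hw, sub_self]
    rw [← hex (m-1)] at hker
    obtain ⟨x, hx⟩ := hker
    refine ⟨dX (m-1) x, ⟨x, rfl⟩, ?_⟩
    rw [← hf (m-1) x, hx, map_sub, hdY m v, sub_zero]
  · rintro c ⟨z, rfl⟩
    obtain ⟨y, rfl⟩ := hsurj (m-1) z
    exact ⟨dY (m-1) y, ⟨y, rfl⟩, (hg (m-1) y).symm⟩
end

section
/- Let X be a bounded chain complex of finitely generated free modules over a principal ideal domain R whose homology groups are torsion. For any integer n, the canonical short exact sequence 0 → τ_{≥n+1}X → X → τ_{≤n}X → 0 is split: there exist chain maps u : X → τ_{≥n+1}X and v : τ_{≤n}X → X with u∘f = id, g∘v = id, u∘v = 0, g∘f = 0, and f∘u + v∘g = id, where f : τ_{≥n+1}X → X and g : X → τ_{≤n}X are the canonical maps. -/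
/-- Let `X` be a bounded chain complex of finitely generated free modules
over a PID `R` with torsion homology.  For any integer `n` the canonical short exact
sequence `0 → τ_{≥n+1}X → X → τ_{≤n}X → 0` is split by chain maps `u, v` satisfying
`u∘f = id`, `g∘v = id`, `u∘v = 0`, `g∘f = 0` and `f∘u + v∘g = id`.
We write `t = n + 2` (so `n + 1 = t - 1`); the truncations only differ from `X` resp. `0`
in degrees `t-1` (where `τ_{≥t-1}X` has component `ker d_{t-1}`) and `t-2` and above/below,
and all the splitting data is concentrated in the maps
`π = u_{t-1} : X_{t-1} → ker d_{t-1}` (encoded as a map to `X_{t-1}` with image in the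
kernel) and `σ = v_{t-1} : im d_{t-1} → X_{t-1}`; in all other degrees `u, v` are
identities or zero, where the identities of the splitting hold trivially.  The conditions
below say exactly: `π` lands in `ker d_{t-1}` and restricts to the identity on it
(`u∘f = id`), `π` is a chain map (`π ∘ d_t = d_t`, the other squares being trivial),
`σ` is a section of the corestriction of `d_{t-1}` (`g∘v = id`, and the chain-map
condition for `v`), `u∘v = 0`, and `f∘u + v∘g = id` in the only nontrivial degree. -/
theorem stmt_5 (R : Type) [CommRing R] [IsDomain R] [IsPrincipalIdealRing R]
    (X : ℤ → Type)
    [∀ n, AddCommGroup (X n)] [∀ n, Module R (X n)]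
    (hfin : ∀ n, Module.Finite R (X n)) (hfree : ∀ n, Module.Free R (X n))
    (dX : ∀ n : ℤ, X n →ₗ[R] X (n-1))
    (hdX : ∀ (n : ℤ) (x : X n), dX (n-1) (dX n x) = 0)
    (hbdd : ∃ N : ℕ, ∀ n : ℤ, (N : ℤ) < |n| → Subsingleton (X n))
    (htor : ∀ (m : ℤ) (x : X (m-1)), dX (m-1) x = 0 →
      ∃ r : R, r ≠ 0 ∧ ∃ y : X m, dX m y = r • x)
    (t : ℤ) :
    ∃ (π : X (t-1) →ₗ[R] X (t-1)) (σ : ↥(LinearMap.range (dX (t-1))) →ₗ[R] X (t-1)),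
      -- π lands in ker d_{t-1} (so it is a map X_{t-1} → (τ_{≥t-1}X)_{t-1})
      (∀ x : X (t-1), dX (t-1) (π x) = 0) ∧
      -- u ∘ f = id : π restricts to the identity on ker d_{t-1}
      (∀ x : X (t-1), dX (t-1) x = 0 → π x = x) ∧
      -- u is a chain map : π ∘ d_t = d_t
      (∀ y : X t, π (dX t y) = dX t y) ∧
      -- g ∘ v = id and v is a chain map : d_{t-1} ∘ σ is the inclusion im d_{t-1} ⊆ X_{t-2}
      (∀ w : ↥(LinearMap.range (dX (t-1))), dX (t-1) (σ w) = (w : X (t-1-1))) ∧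
      -- u ∘ v = 0
      (∀ w : ↥(LinearMap.range (dX (t-1))), π (σ w) = 0) ∧
      -- f ∘ u + v ∘ g = id in degree t-1
      (∀ x : X (t-1),
        π x + σ ⟨dX (t-1) x, LinearMap.mem_range_self (dX (t-1)) x⟩ = x) := by
  -- The range of d_{t-1} is a submodule of the f.g. free module X (t-1-1) over a PID,
  -- hence free, hence projective; so the corestriction of d_{t-1} splits.
  have hB := Module.Free.chooseBasis R (X (t-1-1))
  obtain ⟨k, b⟩ := Submodule.basisOfPid hB (LinearMap.range (dX (t-1)))
  haveI : Module.Free R ↥(LinearMap.range (dX (t-1))) := Module.Free.of_basis b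
  haveI : Module.Projective R ↥(LinearMap.range (dX (t-1))) := inferInstance
  obtain ⟨σ, hσ⟩ := Module.projective_lifting_property
    ((dX (t-1)).rangeRestrict) (LinearMap.id) (dX (t-1)).surjective_rangeRestrict
  have hσ' : ∀ w : ↥(LinearMap.range (dX (t-1))), dX (t-1) (σ w) = (w : X (t-1-1)) := by
    intro w
    have := congrArg (fun f => f w) hσ
    simpa [LinearMap.rangeRestrict, Subtype.ext_iff] using congrArg Subtype.val this
  refine ⟨LinearMap.id - σ ∘ₗ (dX (t-1)).rangeRestrict, σ, ?_, ?_, ?_, hσ', ?_, ?_⟩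
  · intro x
    simp [hσ']
  · intro x hx
    have : (dX (t-1)).rangeRestrict x = 0 := Subtype.ext (by simpa using hx)
    simp [this]
  · intro y
    have h0 : dX (t-1) (dX t y) = 0 := hdX t y
    have : (dX (t-1)).rangeRestrict (dX t y) = 0 := Subtype.ext (by simpa using h0)
    simp [this]
  · intro w
    have hr : (dX (t-1)).rangeRestrict (σ w) = w := Subtype.ext (by simpa using hσ' w)
    simp [hr]
  · intro x
    have : (⟨dX (t-1) x, LinearMap.mem_range_self (dX (t-1)) x⟩ :
        ↥(LinearMap.range (dX (t-1)))) = (dX (t-1)).rangeRestrict x := rfl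
    simp [this]
end

section
/- Let A be an abelian category and consider a 3×3 commutative diagram whose three rows X ↣ X' ↠ X'', Y ↣ Y' ↠ Y'', Z ↣ Z' ↠ Z'' and three columns X ↣ Y ↠ Z, X' ↣ Y' ↠ Z', X'' ↣ Y'' ↠ Z'' are all short exact sequences. Then the sequence Y ⊔_X X' → Y' → Z'' is short exact, where Y ⊔_X X' → Y' is induced by i^Y : Y → Y' and f' : X' → Y' via the pushout, and Y' → Z'' is the composite p^Z ∘ g'. -/
open CategoryTheory Limits

/-- Let `A` be an abelian category and consider a 3×3 commutative
diagram with rows `X ↣ X' ↠ X''`, `Y ↣ Y' ↠ Y''`, `Z ↣ Z' ↠ Z''` (maps `iX, pX`, etc.)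
and columns `X ↣ Y ↠ Z`, `X' ↣ Y' ↠ Z'`, `X'' ↣ Y'' ↠ Z''` (maps `f, g`, `f', g'`,
`f'', g''`), all short exact.  Then the sequence `Y ⊔_X X' → Y' → Z''` is short exact,
where `Y ⊔_X X' → Y'` is induced by `iY` and `f'` via the universal property of the
pushout of `f` and `iX`, and `Y' → Z''` is `g' ≫ pZ`. -/
theorem stmt_10 {A : Type*} [Category A] [Abelian A]
    {X X' X'' Y Y' Y'' Z Z' Z'' : A}
    (iX : X ⟶ X') (pX : X' ⟶ X'') (iY : Y ⟶ Y') (pY : Y' ⟶ Y'')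
    (iZ : Z ⟶ Z') (pZ : Z' ⟶ Z'')
    (f : X ⟶ Y) (g : Y ⟶ Z) (f' : X' ⟶ Y') (g' : Y' ⟶ Z')
    (f'' : X'' ⟶ Y'') (g'' : Y'' ⟶ Z'')
    -- commutativity of the diagram
    (sq1 : f ≫ iY = iX ≫ f') (sq2 : f' ≫ pY = pX ≫ f'')
    (sq3 : g ≫ iZ = iY ≫ g') (sq4 : g' ≫ pZ = pY ≫ g'')
    -- short exactness of the three rows
    (wX : iX ≫ pX = 0) (wY : iY ≫ pY = 0) (wZ : iZ ≫ pZ = 0)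
    (hX : (ShortComplex.mk iX pX wX).ShortExact)
    (hY : (ShortComplex.mk iY pY wY).ShortExact)
    (hZ : (ShortComplex.mk iZ pZ wZ).ShortExact)
    -- short exactness of the three columns
    (wc1 : f ≫ g = 0) (wc2 : f' ≫ g' = 0) (wc3 : f'' ≫ g'' = 0)
    (hc1 : (ShortComplex.mk f g wc1).ShortExact)
    (hc2 : (ShortComplex.mk f' g' wc2).ShortExact)
    (hc3 : (ShortComplex.mk f'' g'' wc3).ShortExact) :
    ∃ w : pushout.desc iY f' sq1 ≫ (g' ≫ pZ) = 0,
      (ShortComplex.mk (pushout.desc iY f' sq1) (g' ≫ pZ) w).ShortExact := by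
  haveI hiY : Mono iY := hY.mono_f
  haveI hpZe : Epi pZ := hZ.epi_g
  haveI hg'e : Epi g' := hc2.epi_g
  haveI hf'' : Mono f'' := hc3.mono_f
  haveI hpXe : Epi pX := hX.epi_g
  set d : pushout f iX ⟶ Y' := pushout.desc iY f' sq1 with hd
  have hinld : pushout.inl f iX ≫ d = iY := pushout.inl_desc _ _ _
  have hinrd : pushout.inr f iX ≫ d = f' := pushout.inr_desc _ _ _
  have w : d ≫ (g' ≫ pZ) = 0 := by
    apply pushout.hom_ext
    · rw [comp_zero, ← Category.assoc, hinld, ← Category.assoc, ← sq3, Category.assoc,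
        wZ, comp_zero]
    · rw [comp_zero, ← Category.assoc, hinrd, ← Category.assoc, wc2, zero_comp]
  -- the map P ⟶ X''
  have hq0 : f ≫ (0 : Y ⟶ X'') = iX ≫ pX := by rw [wX, comp_zero]
  set q : pushout f iX ⟶ X'' := pushout.desc 0 pX hq0 with hqdef
  have hinlq : pushout.inl f iX ≫ q = 0 := pushout.inl_desc _ _ _
  have hinrq : pushout.inr f iX ≫ q = pX := pushout.inr_desc _ _ _
  have hqf'' : q ≫ f'' = d ≫ pY := by
    apply pushout.hom_ext
    · rw [← Category.assoc, hinlq, zero_comp, ← Category.assoc, hinld, wY]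
    · rw [← Category.assoc, hinrq, ← Category.assoc, hinrd, sq2]
  haveI hqe : Epi q := by
    rw [← hinrq] at hpXe
    exact @epi_of_epi _ _ _ _ _ _ _ hpXe
  -- q is a cokernel of inl
  have hXcoker := hX.gIsCokernel
  have hqcoker : IsColimit (CokernelCofork.ofπ q hinlq) := by
    refine CokernelCofork.IsColimit.ofπ' q hinlq (fun {W} t ht => ?_)
    have h1 : iX ≫ (pushout.inr f iX ≫ t) = 0 := by
      rw [← Category.assoc, ← pushout.condition, Category.assoc, ht, comp_zero]
    obtain ⟨s, hs⟩ := CokernelCofork.IsColimit.desc' hXcoker (pushout.inr f iX ≫ t) h1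
    have hs' : pX ≫ s = pushout.inr f iX ≫ t := hs
    refine ⟨s, ?_⟩
    apply pushout.hom_ext
    · rw [← Category.assoc, hinlq, zero_comp, ht]
    · rw [← Category.assoc, hinrq, hs']
  -- inl is mono, hence a kernel of q
  haveI hinl : Mono (pushout.inl f iX) := by
    rw [← hinld] at hiY
    exact @mono_of_mono _ _ _ _ _ _ _ hiY
  haveI : Mono (ShortComplex.mk (pushout.inl f iX) q hinlq).f := hinl
  have S1exact : (ShortComplex.mk (pushout.inl f iX) q hinlq).Exact :=
    ShortComplex.exact_of_g_is_cokernel _ hqcoker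
  have hinlker : IsLimit (KernelFork.ofι (pushout.inl f iX) hinlq) := S1exact.fIsKernel
  -- d is mono
  haveI hdmono : Mono d := by
    apply Preadditive.mono_of_cancel_zero
    intro W t ht
    have htq : t ≫ q = 0 := by
      rw [← cancel_mono f'', Category.assoc, hqf'', ← Category.assoc, ht, zero_comp,
        zero_comp]
    obtain ⟨u, hu⟩ := KernelFork.IsLimit.lift' hinlker t htq
    have hu' : u ≫ pushout.inl f iX = t := hu
    have huiY : u ≫ iY = 0 := by
      rw [← hinld, ← Category.assoc, hu', ht]
    have hu0 : u = 0 := by rwa [← cancel_mono iY, zero_comp]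
    rw [← hu', hu0, zero_comp]
  -- g' ≫ pZ is epi
  haveI : Epi (g' ≫ pZ) := epi_comp _ _
  -- g' ≫ pZ is a cokernel of d
  have hYcoker := hY.gIsCokernel
  have hc3coker := hc3.gIsCokernel
  have hdcoker : IsColimit (CokernelCofork.ofπ (g' ≫ pZ) w) := by
    refine CokernelCofork.IsColimit.ofπ' _ w (fun {W} t ht => ?_)
    have hiYt : iY ≫ t = 0 := by
      rw [← hinld, Category.assoc, ht, comp_zero]
    have hf't : f' ≫ t = 0 := by
      rw [← hinrd, Category.assoc, ht, comp_zero]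
    obtain ⟨s, hs⟩ := CokernelCofork.IsColimit.desc' hYcoker t hiYt
    have hs' : pY ≫ s = t := hs
    have hf''s : f'' ≫ s = 0 := by
      rw [← cancel_epi pX, ← Category.assoc, ← sq2, Category.assoc, hs', hf't, comp_zero]
    obtain ⟨r, hr⟩ := CokernelCofork.IsColimit.desc' hc3coker s hf''s
    have hr' : g'' ≫ r = s := hr
    refine ⟨r, ?_⟩
    rw [sq4, Category.assoc, hr', hs']
  refine ⟨w, ?_⟩
  exact { exact := ShortComplex.exact_of_g_is_cokernel _ hdcoker }
end

section
/- Let A be an abelian category and consider a 3×3 commutative diagram whose three rows and three columns are all short exact, with notation as in the rows X ↣ X' ↠ X'', Y ↣ Y' ↠ Y'', Z ↣ Z' ↠ Z'' and columns X ↣ Y ↠ Z etc. Then the sequence X → Y' → Z' ×_{Z''} Y'' is short exact, where X → Y' is i^Y ∘ f and Y' → Z' ×_{Z''} Y'' is induced by p^Y : Y' → Y'' and g' : Y' → Z' via the pullback. -/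
/-!
Write `P = Z' ×_{Z''} Y''` and view `(g, g', g'')` as a morphism from the row `Y ↣ Y' ↠ Y''`
to the row `Z ↣ Z' ↠ Z''`. Both claims are element chases, done with refinements
(elements defined up to an epimorphic change of source).
A morphism `k` into `Y'` is killed by `Y' ⟶ P` iff it is killed by `pY` and `g'`; by exactness
of the middle row it factors through `Y`, where it is killed by `g` since `iZ` is mono, hence it
factors through `X`. Conversely, given `(z', y'') ∈ P`, lift `y''` to `y'`; then `z' - g' y'`
lies in the kernel of `pZ`, i.e. comes from `Z`, hence (as `g` is epi) from some `y ∈ Y`, and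
`y' + iY y` is a preimage of `(z', y'')`.
-/

open CategoryTheory Limits

namespace CategoryTheory

lemma Limits.pullback.comp_lift_eq_zero_iff {C : Type*} [Category C] [HasZeroMorphisms C]
    {W X Y Z T : C} {f : X ⟶ Z} {g : Y ⟶ Z} [HasPullback f g] (h : W ⟶ X) (k : W ⟶ Y)
    (w : h ≫ f = k ≫ g) (t : T ⟶ W) :
    t ≫ pullback.lift h k w = 0 ↔ t ≫ h = 0 ∧ t ≫ k = 0 := by
  refine ⟨fun ht => ⟨?_, ?_⟩, fun ⟨hh, hk⟩ => pullback.hom_ext ?_ ?_⟩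
  · simpa [pullback.lift_fst] using ht =≫ pullback.fst f g
  · simpa [pullback.lift_snd] using ht =≫ pullback.snd f g
  · simp [pullback.lift_fst, hh]
  · simp [pullback.lift_snd, hk]

namespace ShortComplex.Hom

variable {C : Type*} [Category C] [Abelian C] {S₁ S₂ : ShortComplex C} (φ : S₁ ⟶ S₂)

lemma comp_f_comp_pullback_lift_eq_zero {K : C} {ι : K ⟶ S₁.X₁} (hι : ι ≫ φ.τ₁ = 0) :
    (ι ≫ S₁.f) ≫ pullback.lift φ.τ₂ S₁.g φ.comm₂₃ = 0 := by
  rw [pullback.comp_lift_eq_zero_iff, Category.assoc, ← φ.comm₁₂, reassoc_of% hι,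
    Category.assoc, S₁.zero]
  simp

lemma exact_comp_f_pullback_lift (h₁ : S₁.Exact) [Mono S₂.f] {K : C} {ι : K ⟶ S₁.X₁}
    (hι : ι ≫ φ.τ₁ = 0) (hK : (ShortComplex.mk ι φ.τ₁ hι).Exact) :
    (ShortComplex.mk (ι ≫ S₁.f) (pullback.lift φ.τ₂ S₁.g φ.comm₂₃)
      (φ.comp_f_comp_pullback_lift_eq_zero hι)).Exact := by
  rw [ShortComplex.exact_iff_exact_up_to_refinements]
  intro A k hk
  obtain ⟨hkτ₂, hkg⟩ := (pullback.comp_lift_eq_zero_iff _ _ _ _).1 hk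
  obtain ⟨A₁, π₁, _, y, hy⟩ := h₁.exact_up_to_refinements k hkg
  have hyτ₁ : y ≫ φ.τ₁ = 0 := by
    rw [← cancel_mono S₂.f, Category.assoc, φ.comm₁₂, ← Category.assoc, ← hy, Category.assoc,
      hkτ₂, comp_zero, zero_comp]
  obtain ⟨A₂, π₂, _, x, hx⟩ := hK.exact_up_to_refinements y hyτ₁
  refine ⟨A₂, π₂ ≫ π₁, inferInstance, x, ?_⟩
  dsimp at hx ⊢
  rw [Category.assoc, hy, ← Category.assoc, hx, Category.assoc]

lemma epi_pullback_lift [Epi S₁.g] [Epi φ.τ₁] (h₂ : S₂.Exact) :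
    Epi (pullback.lift φ.τ₂ S₁.g φ.comm₂₃) := by
  rw [epi_iff_surjective_up_to_refinements]
  intro A s
  obtain ⟨A₁, π₁, _, y₁, hy₁⟩ :=
    surjective_up_to_refinements_of_epi S₁.g (s ≫ pullback.snd S₂.g φ.τ₃)
  have hdiff : (π₁ ≫ s ≫ pullback.fst S₂.g φ.τ₃ - y₁ ≫ φ.τ₂) ≫ S₂.g = 0 := by
    rw [Preadditive.sub_comp, sub_eq_zero]
    simp only [Category.assoc, pullback.condition, reassoc_of% hy₁, φ.comm₂₃]
  obtain ⟨A₂, π₂, _, z, hz⟩ := h₂.exact_up_to_refinements _ hdiff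
  obtain ⟨A₃, π₃, _, y, hy⟩ := surjective_up_to_refinements_of_epi φ.τ₁ z
  refine ⟨A₃, π₃ ≫ π₂ ≫ π₁, inferInstance, π₃ ≫ π₂ ≫ y₁ + y ≫ S₁.f, ?_⟩
  apply pullback.hom_ext
  · simp only [Preadditive.add_comp, Category.assoc, pullback.lift_fst, ← φ.comm₁₂,
      ← reassoc_of% hy, ← hz, Preadditive.comp_sub, add_sub_cancel]
  · simp only [Preadditive.add_comp, Category.assoc, pullback.lift_snd, S₁.zero, comp_zero,
      add_zero, hy₁]

end ShortComplex.Hom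

end CategoryTheory

theorem stmt_11_general {A : Type*} [Category A] [Abelian A]
    {X Y Y' Y'' Z Z' Z'' : A}
    (iY : Y ⟶ Y') (pY : Y' ⟶ Y'')
    (iZ : Z ⟶ Z') (pZ : Z' ⟶ Z'')
    (f : X ⟶ Y) (g : Y ⟶ Z) (g' : Y' ⟶ Z')
    (g'' : Y'' ⟶ Z'')
    -- commutativity of the diagram
    (sq3 : g ≫ iZ = iY ≫ g') (sq4 : g' ≫ pZ = pY ≫ g'')
    -- short exactness of the three rows
    (wY : iY ≫ pY = 0) (wZ : iZ ≫ pZ = 0)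
    (hY : (ShortComplex.mk iY pY wY).ShortExact)
    (hZ : (ShortComplex.mk iZ pZ wZ).ShortExact)
    -- short exactness of the three columns
    (wc1 : f ≫ g = 0)
    (hc1 : (ShortComplex.mk f g wc1).ShortExact) :
    ∃ w : (f ≫ iY) ≫ pullback.lift g' pY sq4 = 0,
      (ShortComplex.mk (f ≫ iY) (pullback.lift g' pY sq4) w).ShortExact := by
  let φ : ShortComplex.mk iY pY wY ⟶ ShortComplex.mk iZ pZ wZ :=
    { τ₁ := g, τ₂ := g', τ₃ := g'', comm₁₂ := sq3, comm₂₃ := sq4 }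
  have := hY.mono_f
  have := hY.epi_g
  have := hZ.mono_f
  have := hc1.mono_f
  have := hc1.epi_g
  exact ⟨φ.comp_f_comp_pullback_lift_eq_zero wc1,
    { exact := φ.exact_comp_f_pullback_lift hY.exact wc1 hc1.exact
      mono_f := mono_comp f iY
      epi_g := φ.epi_pullback_lift hZ.exact }⟩

/-- Let `A` be an abelian category and consider a 3×3 commutative
diagram with rows `X ↣ X' ↠ X''`, `Y ↣ Y' ↠ Y''`, `Z ↣ Z' ↠ Z''` and columns
`X ↣ Y ↠ Z`, `X' ↣ Y' ↠ Z'`, `X'' ↣ Y'' ↠ Z''`, all short exact.  Then the sequence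
`X → Y' → Z' ×_{Z''} Y''` is short exact, where `X → Y'` is `f ≫ iY` and
`Y' → Z' ×_{Z''} Y''` is induced by `g'` and `pY` via the universal property of the
pullback of `pZ : Z' → Z''` along `g'' : Y'' → Z''`. -/
theorem stmt_11 {A : Type*} [Category A] [Abelian A]
    {X X' X'' Y Y' Y'' Z Z' Z'' : A}
    (iX : X ⟶ X') (pX : X' ⟶ X'') (iY : Y ⟶ Y') (pY : Y' ⟶ Y'')
    (iZ : Z ⟶ Z') (pZ : Z' ⟶ Z'')
    (f : X ⟶ Y) (g : Y ⟶ Z) (f' : X' ⟶ Y') (g' : Y' ⟶ Z')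
    (f'' : X'' ⟶ Y'') (g'' : Y'' ⟶ Z'')
    -- commutativity of the diagram
    (sq1 : f ≫ iY = iX ≫ f') (sq2 : f' ≫ pY = pX ≫ f'')
    (sq3 : g ≫ iZ = iY ≫ g') (sq4 : g' ≫ pZ = pY ≫ g'')
    -- short exactness of the three rows
    (wX : iX ≫ pX = 0) (wY : iY ≫ pY = 0) (wZ : iZ ≫ pZ = 0)
    (hX : (ShortComplex.mk iX pX wX).ShortExact)
    (hY : (ShortComplex.mk iY pY wY).ShortExact)
    (hZ : (ShortComplex.mk iZ pZ wZ).ShortExact)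
    -- short exactness of the three columns
    (wc1 : f ≫ g = 0) (wc2 : f' ≫ g' = 0) (wc3 : f'' ≫ g'' = 0)
    (hc1 : (ShortComplex.mk f g wc1).ShortExact)
    (hc2 : (ShortComplex.mk f' g' wc2).ShortExact)
    (hc3 : (ShortComplex.mk f'' g'' wc3).ShortExact) :
    ∃ w : (f ≫ iY) ≫ pullback.lift g' pY sq4 = 0,
      (ShortComplex.mk (f ≫ iY) (pullback.lift g' pY sq4) w).ShortExact :=
  stmt_11_general iY pY iZ pZ f g g' g'' sq3 sq4 wY wZ hY hZ wc1 hc1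
end

section
/- Let R be a principal ideal domain and let X → Y → Z be a short exact sequence of two-term complexes of finitely generated R-modules with injective differentials and torsion homology, where X is acyclic. Then, identifying Y ≅ V ⊕ X ⊕ U and Z ≅ V ⊕ U via elementary divisors (U acyclic with identity differential, V with diagonal differential diag(a_1,…,a_n) on R^n with a_1 | a_2 | ⋯ | a_n nonunits), there exists a chain map q : Y → Z' = X ⊕ U which is a degreewise split epimorphism of complexes and such that the composite X ↣ Y → Z' equals the canonical inclusion (id, 0); in particular the composite X → Z' is a degreewise split monomorphism with acyclic cokernel. -/
/-- Let `R` be a PID and `X ↣ Y ↠ Z` a short exact sequence of two-term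
complexes of finitely generated `R`-modules with injective differentials and torsion
homology, with `X` acyclic.  Identifying `Y ≅ V ⊕ X ⊕ U` and `Z ≅ V ⊕ U` via elementary
divisors — `U` acyclic with identity differential, `V = R^k` with diagonal differential
`dV = diag(a_1, …, a_k)`, the `a_i` nonzero nonunits with `a_1 ∣ a_2 ∣ ⋯ ∣ a_k` — there
is a chain map `q : Y → Z' = X ⊕ U` which is a degreewise split epimorphism of complexes
and whose composite with `i : X ↣ Y` is the canonical inclusion `(id, 0)`; in particular
`X → Z'` is a degreewise split monomorphism with acyclic cokernel (`U = [U = U]`).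
The identification is taken as given: `Y` has components `V × X_s × U` and differential
`dV × dX × id`, `Z` has components `V × U` and differential `dV × id`, and `i, p` are
arbitrary chain maps forming a degreewise split short exact sequence. -/
theorem stmt_15 (R : Type) [CommRing R] [IsDomain R] [IsPrincipalIdealRing R]
    (X1 X0 U : Type)
    [AddCommGroup X1] [Module R X1] [AddCommGroup X0] [Module R X0]
    [AddCommGroup U] [Module R U]
    [Module.Finite R X1] [Module.Finite R X0] [Module.Finite R U]
    [Module.Free R U]
    (dX : X1 →ₗ[R] X0)
    -- X is acyclic
    (hdX : Function.Bijective dX)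
    -- the elementary divisors
    (k : ℕ) (a : Fin k → R)
    (ha0 : ∀ i, a i ≠ 0) (haU : ∀ i, ¬ IsUnit (a i))
    (hdiv : ∀ i j : Fin k, i ≤ j → a i ∣ a j)
    (dV : (Fin k → R) →ₗ[R] (Fin k → R))
    (hdV : ∀ (v : Fin k → R) (i : Fin k), dV v i = a i * v i)
    -- i : X ↣ Y and p : Y ↠ Z, where Y = V ⊕ X ⊕ U and Z = V ⊕ U
    (i1 : X1 →ₗ[R] (Fin k → R) × X1 × U) (i0 : X0 →ₗ[R] (Fin k → R) × X0 × U)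
    (p1 : (Fin k → R) × X1 × U →ₗ[R] (Fin k → R) × U)
    (p0 : (Fin k → R) × X0 × U →ₗ[R] (Fin k → R) × U)
    -- i and p are chain maps
    (hi : ∀ x : X1, (dV.prodMap (dX.prodMap (LinearMap.id (R := R) (M := U)))) (i1 x)
            = i0 (dX x))
    (hp : ∀ c : (Fin k → R) × X1 × U,
      (dV.prodMap (LinearMap.id (R := R) (M := U))) (p1 c)
        = p0 ((dV.prodMap (dX.prodMap (LinearMap.id (R := R) (M := U)))) c))
    -- degreewise short exactness
    (hinj1 : Function.Injective i1) (hinj0 : Function.Injective i0)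
    (hex1 : LinearMap.range i1 = LinearMap.ker p1)
    (hex0 : LinearMap.range i0 = LinearMap.ker p0)
    (hsurj1 : Function.Surjective p1) (hsurj0 : Function.Surjective p0)
    -- the sequence is degreewise split: a retraction of i₀ and a section of p₀
    (h0 : (Fin k → R) × X0 × U →ₗ[R] X0) (hh0 : ∀ x : X0, h0 (i0 x) = x)
    (l0 : (Fin k → R) × U →ₗ[R] (Fin k → R) × X0 × U) (hl0 : ∀ z, p0 (l0 z) = z) :
    ∃ (q1 : (Fin k → R) × X1 × U →ₗ[R] X1 × U)
      (q0 : (Fin k → R) × X0 × U →ₗ[R] X0 × U),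
      -- q is a chain map (the differential of Z' = X ⊕ U is dX × id)
      (∀ c : (Fin k → R) × X1 × U,
        (dX.prodMap (LinearMap.id (R := R) (M := U))) (q1 c)
          = q0 ((dV.prodMap (dX.prodMap (LinearMap.id (R := R) (M := U)))) c)) ∧
      -- q is a degreewise split epimorphism
      (∃ s1 : X1 × U →ₗ[R] (Fin k → R) × X1 × U, ∀ z, q1 (s1 z) = z) ∧
      (∃ s0 : X0 × U →ₗ[R] (Fin k → R) × X0 × U, ∀ z, q0 (s0 z) = z) ∧
      -- the composite X ↣ Y → Z' is the canonical (degreewise split) inclusion (id, 0)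
      (∀ x : X1, q1 (i1 x) = (x, 0)) ∧
      (∀ x : X0, q0 (i0 x) = (x, 0)) := by

  classical
  -- abbreviations
  set D : (Fin k → R) × X1 × U →ₗ[R] (Fin k → R) × X0 × U :=
    dV.prodMap (dX.prodMap (LinearMap.id (R := R) (M := U))) with hD
  set e : X1 ≃ₗ[R] X0 := LinearEquiv.ofBijective dX hdX with hedef
  have he : ∀ x : X1, e x = dX x := fun x => by rw [hedef]; rfl
  -- p ∘ i = 0
  have hpi1 : ∀ x : X1, p1 (i1 x) = 0 := by
    intro x
    have : i1 x ∈ LinearMap.ker p1 := hex1 ▸ LinearMap.mem_range_self i1 x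
    simpa using this
  have hpi0 : ∀ x : X0, p0 (i0 x) = 0 := by
    intro x
    have : i0 x ∈ LinearMap.ker p0 := hex0 ▸ LinearMap.mem_range_self i0 x
    simpa using this
  -- degree 1 retraction
  set h1 : (Fin k → R) × X1 × U →ₗ[R] X1 :=
    (e.symm.toLinearMap.comp h0).comp D with hh1def
  have hh1 : ∀ x : X1, h1 (i1 x) = x := by
    intro x
    have : D (i1 x) = i0 (dX x) := hi x
    simp only [hh1def, LinearMap.comp_apply, this, hh0]
    rw [← he]
    exact e.symm_apply_apply x
  -- q maps
  refine ⟨h1.prod ((LinearMap.snd R (Fin k → R) U).comp p1),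
    h0.prod ((LinearMap.snd R (Fin k → R) U).comp p0), ?_, ?_, ?_, ?_, ?_⟩
  · intro c
    have hp2 : (p1 c).2 = (p0 (D c)).2 := by
      have := hp c
      have := congrArg Prod.snd this
      simpa using this
    simp only [LinearMap.prod_apply, LinearMap.prodMap_apply, LinearMap.comp_apply,
      LinearMap.snd_apply, LinearMap.id_apply]
    refine Prod.ext ?_ ?_
    · show dX (h1 c) = h0 (D c)
      simp only [hh1def, LinearMap.comp_apply, LinearEquiv.coe_coe]
      rw [← he]
      exact e.apply_symm_apply _
    · exact hp2
  · -- section of q1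
    have hker : LinearMap.ker p1 ≤ LinearMap.ker (LinearMap.id - i1.comp h1) := by
      intro y hy
      rw [← hex1] at hy
      obtain ⟨x, rfl⟩ := hy
      simp [LinearMap.mem_ker, hh1 x]
    set l1 : (Fin k → R) × U →ₗ[R] (Fin k → R) × X1 × U :=
      ((LinearMap.ker p1).liftQ (LinearMap.id - i1.comp h1) hker).comp
        (p1.quotKerEquivOfSurjective hsurj1).symm.toLinearMap with hl1def
    have hl1 : ∀ y, l1 (p1 y) = y - i1 (h1 y) := by
      intro y
      have hmk : (p1.quotKerEquivOfSurjective hsurj1).symm (p1 y)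
          = Submodule.Quotient.mk y := by
        rw [LinearEquiv.symm_apply_eq]
        rfl
      simp only [hl1def, LinearMap.comp_apply, LinearEquiv.coe_coe, hmk,
        Submodule.liftQ_apply, LinearMap.sub_apply, LinearMap.id_apply,
        LinearMap.comp_apply]
    have hp1l1 : ∀ z, p1 (l1 z) = z := by
      intro z
      obtain ⟨y, rfl⟩ := hsurj1 z
      rw [hl1 y]
      simp [hpi1]
    have hh1l1 : ∀ z, h1 (l1 z) = 0 := by
      intro z
      obtain ⟨y, rfl⟩ := hsurj1 z
      rw [hl1 y]
      simp [hh1]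
    refine ⟨i1.comp (LinearMap.fst R X1 U) +
      l1.comp ((LinearMap.inr R (Fin k → R) U).comp (LinearMap.snd R X1 U)), ?_⟩
    rintro ⟨x, u⟩
    simp only [LinearMap.add_apply, LinearMap.comp_apply, LinearMap.fst_apply,
      LinearMap.snd_apply, LinearMap.inr_apply, map_add, LinearMap.prod_apply,
      Prod.mk_add_mk, hh1, hh1l1, hpi1, hp1l1]
    ext <;> simp [hh1, hh1l1, hpi1, hp1l1]
  · -- section of q0
    refine ⟨i0.comp (LinearMap.fst R X0 U) +
      ((LinearMap.id - i0.comp h0).comp l0).comp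
        ((LinearMap.inr R (Fin k → R) U).comp (LinearMap.snd R X0 U)), ?_⟩
    rintro ⟨x, u⟩
    have h1' : h0 (l0 (0, u) - i0 (h0 (l0 (0, u)))) = 0 := by simp [hh0]
    have h2' : (p0 (l0 (0, u) - i0 (h0 (l0 (0, u))))).2 = u := by
      simp [map_sub, hpi0, hl0]
    ext <;>
      simp [map_add, hh0, hpi0, hl0, map_sub]
  · intro x
    have : D (i1 x) = i0 (dX x) := hi x
    ext
    · show h1 (i1 x) = x
      exact hh1 x
    · show (p1 (i1 x)).2 = 0
      simp [hpi1]
  · intro x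
    ext
    · show h0 (i0 x) = x
      exact hh0 x
    · show (p0 (i0 x)).2 = 0
      simp [hpi0]
end
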